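/- arXiv:2006.14783 — 2 statements merged into one kernel-verified Lean document; each statement's English description precedes it below -/
import Mathlib

section
/- Let A = (a_{ij})_{i,j∈I} be a symmetrizable generalized Cartan matrix (a_{ii} = 2, a_{ij} ∈ ℤ_{≤0} for i ≠ j, a_{ij} = 0 ⟺ a_{ji} = 0), and let μ be an automorphism of A (a permutation of I with a_{μ(i)μ(j)} = a_{ij}). Fix i ∈ I, let 𝒪(i) = {μ^k(i)} be its orbit and N_i = |𝒪(i)|. Then Σ_{p ∈ 𝒪(i)} a_{p,i} > 0 if and only if one of the following holds: (i) a_{μ^k(i), i} = 0 for all k with μ^k(i) ≠ i; or (ii) N_i is even, a_{μ^{N_i/2}(i), i} = −1, and a_{μ^k(i), i} = 0 for all k ≢ 0, N_i/2 (mod N_i). In case (i) the sum equals 2 and in case (ii) it equals 1. -/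
/-! Indexing the orbit by `k < N_i`, the term `k = 0` is `a_{ii} = 2` and all other terms
are `≤ 0`, so the sum is positive iff the off-diagonal part `T` is `0` or `-1`; `T = 0` is
case (i). If `T = -1`, exactly one term `a_{μ^k(i), i}` is nonzero, and it equals `-1`.
Applying `μ^(N_i - k)` gives `a_{μ^(N_i - k)(i), i} = a_{i, μ^k(i)}`, which is nonzero because
`a_{pq} = 0 ↔ a_{qp} = 0`; hence `N_i - k = k`, which is case (ii). -/

open Finset Function

namespace Equiv.Perm

variable {I : Type*} {μ : Perm I} {i : I}

theorem pow_apply_mod_minimalPeriod (k : ℕ) :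
    (μ ^ (k % minimalPeriod μ i)) i = (μ ^ k) i := by
  simp only [coe_pow]
  exact iterate_mod_minimalPeriod_eq

theorem pow_apply_injOn_Iio_minimalPeriod :
    Set.InjOn (fun k => (μ ^ k) i) (Set.Iio (minimalPeriod μ i)) := by
  simpa only [coe_pow] using iterate_injOn_Iio_minimalPeriod

theorem pow_apply_ne_self_of_mem_Ico {k : ℕ} (hk : k ∈ Ico 1 (minimalPeriod μ i)) :
    (μ ^ k) i ≠ i := by
  rw [mem_Ico] at hk
  intro h
  have := pow_apply_injOn_Iio_minimalPeriod (μ := μ) (i := i) (Set.mem_Iio.2 hk.2)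
    (Set.mem_Iio.2 (show 0 < minimalPeriod μ i by omega)) (by simpa using h)
  omega

theorem periodic_pow_apply {M : Type*} (g : I → M) :
    Periodic (fun k => g ((μ ^ k) i)) (minimalPeriod μ i) := by
  intro k
  simp only [coe_pow, iterate_add_apply, iterate_minimalPeriod]

variable {O : Finset I} (hO : ∀ p, p ∈ O ↔ ∃ k : ℕ, (μ ^ k) i = p)
  (hi : i ∈ periodicPts μ)
include hO hi

theorem sum_orbit_eq_sum_range {M : Type*} [AddCommMonoid M] (g : I → M) :
    ∑ p ∈ O, g p = ∑ k ∈ range (minimalPeriod μ i), g ((μ ^ k) i) := by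
  have hn := minimalPeriod_pos_of_mem_periodicPts hi
  symm
  refine sum_nbij (fun k => (μ ^ k) i) (fun k _ => (hO _).2 ⟨k, rfl⟩) ?_ ?_ (fun _ _ => rfl)
  · simpa only [coe_range] using pow_apply_injOn_Iio_minimalPeriod
  · rintro p hp
    obtain ⟨k, rfl⟩ := (hO p).1 hp
    exact ⟨k % minimalPeriod μ i, by simpa using Nat.mod_lt k hn,
      pow_apply_mod_minimalPeriod k⟩

theorem card_orbit : O.card = minimalPeriod μ i := by
  rw [card_eq_sum_ones, sum_orbit_eq_sum_range hO hi]
  simp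

theorem forall_orbit_ne_self_iff (P : I → Prop) :
    (∀ p ∈ O, p ≠ i → P p) ↔ ∀ k ∈ Ico 1 (minimalPeriod μ i), P ((μ ^ k) i) := by
  have hn := minimalPeriod_pos_of_mem_periodicPts hi
  refine ⟨fun h k hk => h _ ((hO _).2 ⟨k, rfl⟩) (pow_apply_ne_self_of_mem_Ico hk), ?_⟩
  rintro h p hp hpi
  obtain ⟨k, rfl⟩ := (hO p).1 hp
  rw [← pow_apply_mod_minimalPeriod] at hpi ⊢
  refine h _ (mem_Ico.2 ⟨Nat.pos_of_ne_zero fun h0 => hpi ?_, Nat.mod_lt k hn⟩)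
  rw [h0, pow_zero, one_apply]

end Equiv.Perm

theorem Function.Periodic.forall_mod_iff {P : ℕ → Prop} {n : ℕ} (hP : Periodic P n)
    (hn : 0 < n) (m : ℕ) :
    (∀ k : ℕ, k % n ≠ 0 → k % n ≠ m → P k) ↔ ∀ k ∈ Ico 1 n, k ≠ m → P k := by
  refine ⟨fun h k hk hkm => ?_, fun h k hk0 hkm => ?_⟩
  · rw [mem_Ico] at hk
    exact h k (by rw [Nat.mod_eq_of_lt hk.2]; omega) (by rwa [Nat.mod_eq_of_lt hk.2])
  · rw [← hP.map_mod_nat]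
    exact h _ (mem_Ico.2 ⟨Nat.pos_of_ne_zero hk0, Nat.mod_lt k hn⟩) hkm

theorem Finset.exists_eq_neg_one_of_sum_eq_neg_one {ι : Type*} {s : Finset ι} {f : ι → ℤ}
    (hf : ∀ k ∈ s, f k ≤ 0) (hsum : ∑ k ∈ s, f k = -1) :
    ∃ k ∈ s, f k = -1 ∧ ∀ j ∈ s, j ≠ k → f j = 0 := by
  classical
  obtain ⟨k, hk, hfk⟩ := exists_ne_zero_of_sum_ne_zero (hsum.trans_ne (by norm_num))
  have hrest : ∑ j ∈ s.erase k, f j ≤ 0 := sum_nonpos fun j hj => hf j (mem_of_mem_erase hj)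
  have hsplit := add_sum_erase s f hk
  have hfk' : f k = -1 := by have := hf k hk; omega
  refine ⟨k, hk, hfk', fun j hj hjk => ?_⟩
  have hrest0 : ∑ j ∈ s.erase k, f j = 0 := by omega
  exact (sum_eq_zero_iff_of_nonpos fun j hj => hf j (mem_of_mem_erase hj)).1 hrest0 j
    (mem_erase.2 ⟨hjk, hj⟩)

theorem sum_Ico_eq_neg_one_iff_even {f : ℕ → ℤ} {n : ℕ} (hn : 0 < n)
    (hle : ∀ k ∈ Ico 1 n, f k ≤ 0)
    (hrefl : ∀ k ∈ Ico 1 n, f k ≠ 0 → f (n - k) ≠ 0) :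
    ∑ k ∈ Ico 1 n, f k = -1 ↔
      Even n ∧ f (n / 2) = -1 ∧ ∀ k ∈ Ico 1 n, k ≠ n / 2 → f k = 0 := by
  constructor
  · intro hsum
    obtain ⟨k, hk, hfk, hzero⟩ := exists_eq_neg_one_of_sum_eq_neg_one hle hsum
    have hk' := mem_Ico.1 hk
    have hmirror : n - k = k := by
      by_contra hne
      exact hrefl k hk (by omega) (hzero _ (mem_Ico.2 (by omega)) hne)
    have hhalf : n / 2 = k := by omega
    exact ⟨⟨k, by omega⟩, hhalf ▸ hfk, hhalf ▸ hzero⟩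
  · rintro ⟨⟨m, rfl⟩, hfm, hzero⟩
    rw [sum_eq_single_of_mem _ (mem_Ico.2 (by omega)) hzero, hfm]

namespace Equiv.Perm

variable {I : Type*} {μ : Perm I} {A : I → I → ℤ} (hμ : ∀ a b, A (μ a) (μ b) = A a b)
include hμ

theorem apply_pow_apply_pow (m : ℕ) (a b : I) : A ((μ ^ m) a) ((μ ^ m) b) = A a b := by
  induction m generalizing a b with
  | zero => rfl
  | succ m ih => rw [pow_succ', mul_apply, mul_apply, hμ, ih]

theorem apply_pow_minimalPeriod_sub {i : I} {k : ℕ} (hk : k ≤ minimalPeriod μ i) :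
    A ((μ ^ (minimalPeriod μ i - k)) i) i = A i ((μ ^ k) i) := by
  conv_lhs => rw [← apply_pow_apply_pow hμ k]
  rw [← mul_apply, ← pow_add, Nat.add_sub_cancel' hk, coe_pow, iterate_minimalPeriod]

end Equiv.Perm

open Equiv.Perm

theorem stmt_13_general (I : Type*) [Fintype I]
    (A : I → I → ℤ)
    (hdiag : ∀ i, A i i = 2)
    (hoff : ∀ i j, i ≠ j → A i j ≤ 0)
    (hzero : ∀ i j, A i j = 0 ↔ A j i = 0)
    (μ : Equiv.Perm I) (hμ : ∀ a b, A (μ a) (μ b) = A a b)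
    (i : I) (O : Finset I) (hO : ∀ p, p ∈ O ↔ ∃ k : ℕ, (μ ^ k) i = p) :
    (0 < ∑ p ∈ O, A p i ↔
      ((∀ p ∈ O, p ≠ i → A p i = 0) ∨
       (Even O.card ∧ A ((μ ^ (O.card / 2)) i) i = -1 ∧
        ∀ k : ℕ, k % O.card ≠ 0 → k % O.card ≠ O.card / 2 → A ((μ ^ k) i) i = 0))) ∧
    ((∀ p ∈ O, p ≠ i → A p i = 0) → ∑ p ∈ O, A p i = 2) ∧
    ((Even O.card ∧ A ((μ ^ (O.card / 2)) i) i = -1 ∧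
        ∀ k : ℕ, k % O.card ≠ 0 → k % O.card ≠ O.card / 2 → A ((μ ^ k) i) i = 0) →
      ∑ p ∈ O, A p i = 1) := by
  have hi : i ∈ periodicPts μ := μ.injective.mem_periodicPts i
  have hn : 0 < minimalPeriod μ i := minimalPeriod_pos_of_mem_periodicPts hi
  have hle : ∀ k ∈ Ico 1 (minimalPeriod μ i), A ((μ ^ k) i) i ≤ 0 := fun k hk =>
    hoff _ _ (pow_apply_ne_self_of_mem_Ico hk)
  have hrefl : ∀ k ∈ Ico 1 (minimalPeriod μ i),
      A ((μ ^ k) i) i ≠ 0 → A ((μ ^ (minimalPeriod μ i - k)) i) i ≠ 0 := fun k hk hne => by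
    rwa [apply_pow_minimalPeriod_sub hμ (mem_Ico.1 hk).2.le, Ne, hzero]
  have hsum : ∑ p ∈ O, A p i = 2 + ∑ k ∈ Ico 1 (minimalPeriod μ i), A ((μ ^ k) i) i := by
    rw [sum_orbit_eq_sum_range hO hi, sum_range_eq_add_Ico _ hn, pow_zero, one_apply, hdiag]
  have hT := sum_nonpos hle
  rw [card_orbit hO hi, forall_orbit_ne_self_iff hO hi (fun p => A p i = 0),
    (periodic_pow_apply (fun p => A p i = 0)).forall_mod_iff hn,
    ← sum_Ico_eq_neg_one_iff_even hn hle hrefl,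
    ← sum_eq_zero_iff_of_nonpos hle, hsum]
  omega

theorem stmt_13 (I : Type*) [Fintype I] [DecidableEq I]
    (A : I → I → ℤ)
    (hdiag : ∀ i, A i i = 2)
    (hoff : ∀ i j, i ≠ j → A i j ≤ 0)
    (hzero : ∀ i j, A i j = 0 ↔ A j i = 0)
    (r : I → ℤ) (hr : ∀ i, 0 < r i) (hsym : ∀ i j, r i * A i j = r j * A j i)
    (μ : Equiv.Perm I) (hμ : ∀ a b, A (μ a) (μ b) = A a b)
    (i : I) (O : Finset I) (hO : ∀ p, p ∈ O ↔ ∃ k : ℕ, (μ ^ k) i = p) :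
    (0 < ∑ p ∈ O, A p i ↔
      ((∀ p ∈ O, p ≠ i → A p i = 0) ∨
       (Even O.card ∧ A ((μ ^ (O.card / 2)) i) i = -1 ∧
        ∀ k : ℕ, k % O.card ≠ 0 → k % O.card ≠ O.card / 2 → A ((μ ^ k) i) i = 0))) ∧
    ((∀ p ∈ O, p ≠ i → A p i = 0) → ∑ p ∈ O, A p i = 2) ∧
    ((Even O.card ∧ A ((μ ^ (O.card / 2)) i) i = -1 ∧
        ∀ k : ℕ, k % O.card ≠ 0 → k % O.card ≠ O.card / 2 → A ((μ ^ k) i) i = 0) →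
      ∑ p ∈ O, A p i = 1) :=
  stmt_13_general I A hdiag hoff hzero μ hμ i O hO
end

section
/- Let A = (a_{ij})_{i,j∈I} be a symmetrizable GCM with symmetrizing positive integers (r_i) (so r_i a_{ij} = r_j a_{ji}), and let μ be an automorphism of A of order N satisfying (LC1): Σ_{p∈𝒪(i)} a_{pi} > 0 for all i. For each i let N_i = |𝒪(i)|, let s_i = 1 if the orbit condition (i) of (LC1) holds and s_i = 2 if condition (ii) holds, and define ǎ_{ij} = s_i · Σ_{p∈𝒪(i)} a_{pj}. Fix a set Ǐ of orbit representatives. Then the folded matrix Ǎ = (ǎ_{ij})_{i,j∈Ǐ} is again a symmetrizable generalized Cartan matrix: ǎ_{ii} = 2, ǎ_{ij} ∈ ℤ_{≤0} for i ≠ j in Ǐ, ǎ_{ij} = 0 ⟺ ǎ_{ji} = 0, and the diagonal matrix with entries ř_i = N·r_i/(s_i·N_i) symmetrizes Ǎ, i.e. ř_i · ǎ_{ij} = ř_j · ǎ_{ji} for all i,j ∈ Ǐ. -/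
/-- Orbit condition (i) of (LC1): the Dynkin subdiagram on the orbit of `i`
is a disjoint union of type `A₁` diagrams. -/
def condI {I : Type*} (A : I → I → ℤ) (O : I → Finset I) (i : I) : Prop :=
  ∀ p ∈ O i, p ≠ i → A p i = 0

/-- Orbit condition (ii) of (LC1): the Dynkin subdiagram on the orbit of `i`
is a disjoint union of type `A₂` diagrams. -/
def condII {I : Type*} (A : I → I → ℤ) (μ : Equiv.Perm I) (O : I → Finset I) (i : I) : Prop :=
  Even (O i).card ∧ A ((μ ^ ((O i).card / 2)) i) i = -1 ∧
    ∀ k : ℕ, k % (O i).card ≠ 0 → k % (O i).card ≠ (O i).card / 2 →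
      A ((μ ^ k) i) i = 0

/-!
Summing `r_p a_{pq} = r_q a_{qp}` over `p ∈ 𝒪(i)`, `q ∈ 𝒪(j)`, and using that `r` is constant
on orbits while `∑_{p ∈ 𝒪(i)} a_{pq}` does not depend on `q ∈ 𝒪(j)` (since `μ` permutes `𝒪(i)`),
gives `N_j r_i ∑_{p ∈ 𝒪(i)} a_{pj} = N_i r_j ∑_{q ∈ 𝒪(j)} a_{qi}`. Dividing by `N_i N_j / N` this
is the symmetrizability of `Ǎ`, and it also shows `ǎ_{ij} = 0 ↔ ǎ_{ji} = 0`.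
On the diagonal the orbit sum `∑_{p ∈ 𝒪(i)} a_{pi}` is `2` under (i) and `2 - 1 = 1` under (ii).
-/

open Finset Function

namespace Equiv.Perm

variable {α : Type*} {σ : Perm α} {x : α} {s : Finset α}

theorem sameCycle_iff_exists_nat_pow_eq [Finite α] {y : α} :
    σ.SameCycle x y ↔ ∃ k : ℕ, (σ ^ k) x = y :=
  ⟨SameCycle.exists_nat_pow_eq, fun ⟨k, hk⟩ => ⟨k, by rwa [zpow_natCast]⟩⟩

theorem SameCycle.apply_eq_of_apply_perm_eq [Finite α] {β : Type*} {f : α → β}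
    (hf : ∀ a, f (σ a) = f a) {y : α} (h : σ.SameCycle x y) : f y = f x := by
  obtain ⟨k, rfl⟩ := h.exists_nat_pow_eq
  clear h
  induction k with
  | zero => rfl
  | succ k ih => rw [pow_succ', mul_apply, hf, ih]

theorem sum_comp_apply_of_mem_iff_sameCycle {M : Type*} [AddCommMonoid M]
    (hs : ∀ p, p ∈ s ↔ σ.SameCycle x p) (f : α → M) :
    ∑ p ∈ s, f (σ p) = ∑ p ∈ s, f p :=
  sum_equiv σ (fun p => by simp [hs]) (fun _ _ => rfl)

theorem sum_range_minimalPeriod_of_mem_iff_sameCycle [Finite α] {M : Type*} [AddCommMonoid M]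
    (hs : ∀ p, p ∈ s ↔ σ.SameCycle x p) (f : α → M) :
    ∑ k ∈ range (minimalPeriod σ x), f ((σ ^ k) x) = ∑ p ∈ s, f p := by
  have hper : 0 < minimalPeriod σ x :=
    minimalPeriod_pos_of_mem_periodicPts (σ.injective.mem_periodicPts x)
  refine sum_nbij (fun k => (σ ^ k) x)
    (fun k _ => (hs _).2 (sameCycle_pow_right.2 (SameCycle.refl _ _))) ?_ ?_ (fun _ _ => rfl)
  · intro k hk l hl h
    exact iterate_injOn_Iio_minimalPeriod (by simpa using hk) (by simpa using hl)
      (by simpa only [coe_pow] using h)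
  · intro p hp
    obtain ⟨k, rfl⟩ := ((hs p).1 hp).exists_nat_pow_eq
    exact ⟨k % minimalPeriod σ x, by simpa using Nat.mod_lt k hper,
      by simpa only [coe_pow] using iterate_mod_minimalPeriod_eq⟩

theorem card_eq_minimalPeriod_of_mem_iff_sameCycle [Finite α]
    (hs : ∀ p, p ∈ s ↔ σ.SameCycle x p) : s.card = minimalPeriod σ x := by
  simpa using (sum_range_minimalPeriod_of_mem_iff_sameCycle hs fun _ => (1 : ℕ)).symm

end Equiv.Perm

open Equiv.Perm

section Folding

variable {I : Type*} {A : I → I → ℤ} {μ : Equiv.Perm I} {O : I → Finset I} {i : I}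

theorem sum_orbit_self_of_condI (hdiag : A i i = 2) (hi : i ∈ O i) (h : condI A O i) :
    ∑ p ∈ O i, A p i = 2 := by
  rw [sum_eq_single_of_mem i hi h, hdiag]

theorem sum_orbit_self_of_condII [Finite I] (hO : ∀ p, p ∈ O i ↔ μ.SameCycle i p)
    (hdiag : A i i = 2) (h : condII A μ O i) : ∑ p ∈ O i, A p i = 1 := by
  obtain ⟨⟨m, hm⟩, hhalf, hzero⟩ := h
  have hpos : 0 < (O i).card := card_pos.2 ⟨i, (hO i).2 (SameCycle.refl _ _)⟩
  rw [← sum_range_minimalPeriod_of_mem_iff_sameCycle hO,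
    ← card_eq_minimalPeriod_of_mem_iff_sameCycle hO,
    sum_eq_add_of_mem 0 ((O i).card / 2) (mem_range.2 hpos)
      (mem_range.2 (Nat.div_lt_self hpos one_lt_two)) (by omega)]
  · simp [hdiag, hhalf]
  · rintro k hk ⟨hk0, hkhalf⟩
    rw [mem_range] at hk
    exact hzero k (by rwa [Nat.mod_eq_of_lt hk]) (by rwa [Nat.mod_eq_of_lt hk])

variable [Finite I] (hO : ∀ i p, p ∈ O i ↔ μ.SameCycle i p)
  (hμ : ∀ a b, A (μ a) (μ b) = A a b)
include hO hμ

theorem sum_orbit_apply_eq_of_sameCycle (i : I) {j q : I} (h : μ.SameCycle j q) :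
    ∑ p ∈ O i, A p q = ∑ p ∈ O i, A p j := by
  refine h.apply_eq_of_apply_perm_eq (f := fun q => ∑ p ∈ O i, A p q) fun q => ?_
  calc ∑ p ∈ O i, A p (μ q) = ∑ p ∈ O i, A (μ p) (μ q) :=
        (sum_comp_apply_of_mem_iff_sameCycle (hO i) fun p => A p (μ q)).symm
    _ = ∑ p ∈ O i, A p q := by simp only [hμ]

theorem mul_card_mul_sum_orbit_comm {r : I → ℤ} (hsym : ∀ i j, r i * A i j = r j * A j i)
    (hrμ : ∀ i, r (μ i) = r i) (i j : I) :
    r i * (O j).card * ∑ p ∈ O i, A p j = r j * (O i).card * ∑ p ∈ O j, A p i := by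
  have hdouble : ∀ i j, ∑ p ∈ O i, ∑ q ∈ O j, r p * A p q
      = r i * (O j).card * ∑ p ∈ O i, A p j := by
    intro i j
    calc ∑ p ∈ O i, ∑ q ∈ O j, r p * A p q = r i * ∑ q ∈ O j, ∑ p ∈ O i, A p q := by
          rw [sum_comm, mul_sum]
          refine sum_congr rfl fun q _ => ?_
          rw [mul_sum]
          refine sum_congr rfl fun p hp => ?_
          rw [((hO i p).1 hp).apply_eq_of_apply_perm_eq hrμ]
      _ = r i * ∑ q ∈ O j, ∑ p ∈ O i, A p j := by
          congr 1
          exact sum_congr rfl fun q hq => sum_orbit_apply_eq_of_sameCycle hO hμ i ((hO j q).1 hq)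
      _ = r i * (O j).card * ∑ p ∈ O i, A p j := by
          rw [sum_const, nsmul_eq_mul, mul_assoc]
  rw [← hdouble, ← hdouble, sum_comm]
  simp only [hsym]

end Folding

theorem stmt_14_general (I : Type*) [Fintype I]
    (A : I → I → ℤ)
    (hdiag : ∀ i, A i i = 2)
    (hoff : ∀ i j, i ≠ j → A i j ≤ 0)
    (r : I → ℤ) (hr : ∀ i, 0 < r i) (hsym : ∀ i j, r i * A i j = r j * A j i)
    (μ : Equiv.Perm I) (hμ : ∀ a b, A (μ a) (μ b) = A a b)
    (hrμ : ∀ i, r (μ i) = r i)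
    (N : ℕ) (hN : orderOf μ = N)
    (O : I → Finset I) (hO : ∀ i p, p ∈ O i ↔ ∃ k : ℕ, (μ ^ k) i = p)
    (s : I → ℤ) (hs : ∀ i, (s i = 1 ∧ condI A O i) ∨ (s i = 2 ∧ condII A μ O i))
    (Irep : Finset I) (hIrep : ∀ i : I, ∃! j, j ∈ Irep ∧ i ∈ O j) :
    (∀ i ∈ Irep, s i * ∑ p ∈ O i, A p i = 2) ∧
    (∀ i ∈ Irep, ∀ j ∈ Irep, i ≠ j → s i * ∑ p ∈ O i, A p j ≤ 0) ∧
    (∀ i ∈ Irep, ∀ j ∈ Irep,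
      (s i * ∑ p ∈ O i, A p j = 0 ↔ s j * ∑ p ∈ O j, A p i = 0)) ∧
    (∀ i ∈ Irep, 0 < ((N : ℚ) * (r i : ℚ)) / ((s i : ℚ) * ((O i).card : ℚ))) ∧
    (∀ i ∈ Irep, ∀ j ∈ Irep,
      ((N : ℚ) * (r i : ℚ)) / ((s i : ℚ) * ((O i).card : ℚ)) *
          ((s i * ∑ p ∈ O i, A p j : ℤ) : ℚ)
        = ((N : ℚ) * (r j : ℚ)) / ((s j : ℚ) * ((O j).card : ℚ)) *
          ((s j * ∑ p ∈ O j, A p i : ℤ) : ℚ)) := by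
  have hO' : ∀ i p, p ∈ O i ↔ μ.SameCycle i p := fun i p =>
    (hO i p).trans sameCycle_iff_exists_nat_pow_eq.symm
  have hmem : ∀ i, i ∈ O i := fun i => (hO' i i).2 (SameCycle.refl _ _)
  have hcard : ∀ i, 0 < (O i).card := fun i => card_pos.2 ⟨i, hmem i⟩
  have hspos : ∀ i, 0 < s i := fun i => by rcases hs i with ⟨h, -⟩ | ⟨h, -⟩ <;> omega
  have hN0 : 0 < N := hN ▸ orderOf_pos μ
  have hfold := mul_card_mul_sum_orbit_comm hO' hμ hsym hrμ
  refine ⟨fun i _ => ?_, fun i hi j hj hij => ?_, fun i _ j _ => ?_, fun i _ => ?_,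
    fun i _ j _ => ?_⟩
  · rcases hs i with ⟨hs1, h⟩ | ⟨hs2, h⟩
    · rw [sum_orbit_self_of_condI (hdiag i) (hmem i) h, hs1]; rfl
    · rw [sum_orbit_self_of_condII (hO' i) (hdiag i) h, hs2]; rfl
  · have hji : j ∉ O i := fun hji => hij ((hIrep j).unique ⟨hi, hji⟩ ⟨hj, hmem j⟩)
    exact mul_nonpos_of_nonneg_of_nonpos (hspos i).le
      (sum_nonpos fun p hp => hoff p j (ne_of_mem_of_not_mem hp hji))
  · have hscale : ∀ i j, s i * ∑ p ∈ O i, A p j = 0 ↔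
        r i * (O j).card * ∑ p ∈ O i, A p j = 0 := fun i j => by
      simp [(hspos i).ne', (hr i).ne', (hcard j).ne']
    rw [hscale, hscale, hfold]
  · have := hr i; have := hspos i; have := hcard i
    positivity
  · have h : (r i : ℚ) * (O j).card * ∑ p ∈ O i, (A p j : ℚ)
        = r j * (O i).card * ∑ p ∈ O j, (A p i : ℚ) := by exact_mod_cast hfold i j
    have := (hspos i).ne'; have := (hspos j).ne'; have := (hcard i).ne'; have := (hcard j).ne'
    push_cast
    field_simp
    linear_combination h

theorem stmt_14 (I : Type*) [Fintype I] [DecidableEq I]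
    (A : I → I → ℤ)
    (hdiag : ∀ i, A i i = 2)
    (hoff : ∀ i j, i ≠ j → A i j ≤ 0)
    (hzero : ∀ i j, A i j = 0 ↔ A j i = 0)
    (r : I → ℤ) (hr : ∀ i, 0 < r i) (hsym : ∀ i j, r i * A i j = r j * A j i)
    (μ : Equiv.Perm I) (hμ : ∀ a b, A (μ a) (μ b) = A a b)
    (hrμ : ∀ i, r (μ i) = r i)
    (N : ℕ) (hN : orderOf μ = N)
    (O : I → Finset I) (hO : ∀ i p, p ∈ O i ↔ ∃ k : ℕ, (μ ^ k) i = p)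
    (hLC1 : ∀ i, 0 < ∑ p ∈ O i, A p i)
    (s : I → ℤ) (hs : ∀ i, (s i = 1 ∧ condI A O i) ∨ (s i = 2 ∧ condII A μ O i))
    (Irep : Finset I) (hIrep : ∀ i : I, ∃! j, j ∈ Irep ∧ i ∈ O j) :
    (∀ i ∈ Irep, s i * ∑ p ∈ O i, A p i = 2) ∧
    (∀ i ∈ Irep, ∀ j ∈ Irep, i ≠ j → s i * ∑ p ∈ O i, A p j ≤ 0) ∧
    (∀ i ∈ Irep, ∀ j ∈ Irep,
      (s i * ∑ p ∈ O i, A p j = 0 ↔ s j * ∑ p ∈ O j, A p i = 0)) ∧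
    (∀ i ∈ Irep, 0 < ((N : ℚ) * (r i : ℚ)) / ((s i : ℚ) * ((O i).card : ℚ))) ∧
    (∀ i ∈ Irep, ∀ j ∈ Irep,
      ((N : ℚ) * (r i : ℚ)) / ((s i : ℚ) * ((O i).card : ℚ)) *
          ((s i * ∑ p ∈ O i, A p j : ℤ) : ℚ)
        = ((N : ℚ) * (r j : ℚ)) / ((s j : ℚ) * ((O j).card : ℚ)) *
          ((s j * ∑ p ∈ O j, A p i : ℤ) : ℚ)) :=
  stmt_14_general I A hdiag hoff r hr hsym μ hμ hrμ N hN O hO s hs Irep hIrep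
end
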